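/- arXiv:1610.07680 — 5 statements merged into one kernel-verified Lean document; each statement's English description precedes it below -/
import Mathlib

section
/- Let $A$ be an $n \times n$ invertible matrix with integer entries all bounded in absolute value by $M$. If $Ax = b$ for vectors $x, b \in \mathbb{C}^n$, then $\|x\|_\infty \leq M^{n-1} n^{n/2} \|b\|_\infty$. -/
/-!
By Cramer's rule `det A * x i` is the determinant of `A` with its `i`-th column replaced by `b`,
and `‖det A‖ ≥ 1` because `det A` is a nonzero integer. Hadamard's inequality bounds that
determinant by the product of the Euclidean norms of its columns: at most `√n * M` for each of
the `n - 1` columns of `A`, and `√n * B` for `b`.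
-/

open Matrix Finset
open scoped ComplexOrder

theorem Real.prod_le_arith_mean_pow {ι : Type*} (s : Finset ι) (z : ι → ℝ)
    (hz : ∀ i ∈ s, 0 ≤ z i) : ∏ i ∈ s, z i ≤ ((∑ i ∈ s, z i) / #s) ^ #s := by
  rcases s.eq_empty_or_nonempty with rfl | hs
  · simp
  have hcard : (0 : ℝ) < #s := by exact_mod_cast hs.card_pos
  have amgm := Real.geom_mean_le_arith_mean_weighted s (fun _ ↦ (#s : ℝ)⁻¹) z
    (fun _ _ ↦ by positivity) (by simp [hcard.ne']) hz
  rw [← Finset.mul_sum, ← div_eq_inv_mul, Real.finsetProd_rpow s z hz] at amgm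
  calc ∏ i ∈ s, z i = ((∏ i ∈ s, z i) ^ (#s : ℝ)⁻¹) ^ #s := by
        rw [← Real.rpow_natCast, ← Real.rpow_mul (prod_nonneg hz), inv_mul_cancel₀ hcard.ne',
          Real.rpow_one]
    _ ≤ ((∑ i ∈ s, z i) / #s) ^ #s := by gcongr; exact Real.rpow_nonneg (prod_nonneg hz) _

variable {𝕜 m n : Type*} [RCLike 𝕜] [Fintype m] [Fintype n]

theorem Matrix.trace_conjTranspose_mul_self (S : Matrix m n 𝕜) :
    (Sᴴ * S).trace = ((∑ j, ∑ i, ‖S i j‖ ^ 2 : ℝ) : 𝕜) := by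
  simp [Matrix.trace, mul_apply, RCLike.conj_mul]

variable [DecidableEq n]

theorem Matrix.det_conjTranspose_mul_self (S : Matrix n n 𝕜) :
    (Sᴴ * S).det = ((‖S.det‖ ^ 2 : ℝ) : 𝕜) := by
  simp [det_mul, det_conjTranspose, RCLike.star_def, RCLike.conj_mul]

/-- The eigenvalues of `Sᴴ * S` have product `‖det S‖ ^ 2` and sum `∑ ‖S i j‖ ^ 2`, so this is
AM-GM for them. -/
theorem Matrix.norm_det_sq_le_sum_norm_sq_div_card_pow (S : Matrix n n 𝕜) :
    ‖S.det‖ ^ 2 ≤ ((∑ j, ∑ i, ‖S i j‖ ^ 2) / Fintype.card n) ^ Fintype.card n := by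
  have hG := posSemidef_conjTranspose_mul_self S
  have hdet := hG.1.det_eq_prod_eigenvalues
  have htrace := hG.1.trace_eq_sum_eigenvalues
  rw [det_conjTranspose_mul_self, ← RCLike.ofReal_prod, RCLike.ofReal_inj] at hdet
  rw [trace_conjTranspose_mul_self, ← RCLike.ofReal_sum, RCLike.ofReal_inj] at htrace
  rw [hdet, htrace]
  exact Real.prod_le_arith_mean_pow _ _ fun i _ ↦ hG.eigenvalues_nonneg i

/-- Hadamard's inequality. Normalising the columns reduces it to the case where every column has
norm `1`. -/
theorem Matrix.norm_det_sq_le_prod_sum_norm_sq (C : Matrix n n 𝕜) :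
    ‖C.det‖ ^ 2 ≤ ∏ j, ∑ i, ‖C i j‖ ^ 2 := by
  set d : n → ℝ := fun j ↦ ∑ i, ‖C i j‖ ^ 2
  by_cases hzero : ∃ j, d j = 0
  · obtain ⟨j, hj⟩ := hzero
    have hcol : ∀ i, C i j = 0 := fun i ↦ by
      simpa using (sum_eq_zero_iff_of_nonneg fun i _ ↦ by positivity).1 hj i (mem_univ i)
    rw [det_eq_zero_of_column_eq_zero j hcol, norm_zero, zero_pow two_ne_zero]
    exact prod_nonneg fun j _ ↦ by positivity
  push Not at hzero
  have hd : ∀ j, 0 < d j := fun j ↦ lt_of_le_of_ne (by positivity) (hzero j).symm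
  have hsqrt : ∀ j, (√(d j) : 𝕜) ≠ 0 := fun j ↦ RCLike.ofReal_ne_zero.2 (Real.sqrt_pos.2 (hd j)).ne'
  set S : Matrix n n 𝕜 := C * diagonal fun j ↦ ((√(d j))⁻¹ : 𝕜)
  have hCS : C = S * diagonal fun j ↦ (√(d j) : 𝕜) := by
    rw [Matrix.mul_assoc, diagonal_mul_diagonal]
    simp only [inv_mul_cancel₀ (hsqrt _), diagonal_one, Matrix.mul_one]
  have hS_col : ∀ j, ∑ i, ‖S i j‖ ^ 2 = 1 := fun j ↦ by
    simp only [S, mul_diagonal, norm_mul, norm_inv, RCLike.norm_ofReal, mul_pow, ← sum_mul]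
    rw [abs_of_nonneg (Real.sqrt_nonneg _), inv_pow, Real.sq_sqrt (hd j).le]
    exact mul_inv_cancel₀ (hd j).ne'
  have hS : ‖S.det‖ ^ 2 ≤ 1 := by
    have := S.norm_det_sq_le_sum_norm_sq_div_card_pow
    simp only [hS_col, sum_const, card_univ, nsmul_one] at this
    exact this.trans (pow_le_one₀ (by positivity) (div_self_le_one _))
  calc ‖C.det‖ ^ 2 = ‖S.det‖ ^ 2 * ∏ j, d j := by
        rw [hCS, det_mul, det_diagonal, norm_mul, mul_pow, norm_prod]
        congr 1
        rw [← prod_pow]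
        exact prod_congr rfl fun j _ ↦ by rw [RCLike.norm_ofReal, sq_abs, Real.sq_sqrt (hd j).le]
    _ ≤ ∏ j, d j := mul_le_of_le_one_left (prod_nonneg fun j _ ↦ (hd j).le) hS

theorem Matrix.norm_det_le_sqrt_card_pow_mul_prod (C : Matrix n n 𝕜) {c : n → ℝ}
    (hc : ∀ i j, ‖C i j‖ ≤ c j) :
    ‖C.det‖ ≤ √(Fintype.card n) ^ Fintype.card n * ∏ j, c j := by
  have hc0 : ∀ j, 0 ≤ c j := fun j ↦ (norm_nonneg _).trans (hc j j)
  have hcol : ∀ j, ∑ i, ‖C i j‖ ^ 2 ≤ (√(Fintype.card n) * c j) ^ 2 := fun j ↦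
    calc ∑ i, ‖C i j‖ ^ 2 ≤ ∑ _i : n, c j ^ 2 :=
          sum_le_sum fun i _ ↦ pow_le_pow_left₀ (norm_nonneg _) (hc i j) 2
      _ = (√(Fintype.card n) * c j) ^ 2 := by
          rw [sum_const, card_univ, nsmul_eq_mul, mul_pow, Real.sq_sqrt (Nat.cast_nonneg _)]
  have hsq := C.norm_det_sq_le_prod_sum_norm_sq.trans
    (prod_le_prod (fun j _ ↦ by positivity) fun j _ ↦ hcol j)
  rw [prod_pow, prod_mul_distrib, prod_const, card_univ] at hsq
  exact (pow_le_pow_iff_left₀ (norm_nonneg _)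
    (mul_nonneg (by positivity) (prod_nonneg fun j _ ↦ hc0 j)) two_ne_zero).1 hsq

theorem Matrix.cramer_mulVec (A : Matrix n n 𝕜) (x : n → 𝕜) : cramer A (A *ᵥ x) = A.det • x := by
  rw [cramer_eq_adjugate_mulVec, mulVec_mulVec, adjugate_mul, smul_mulVec, one_mulVec]

theorem Matrix.one_le_norm_det_of_intCast_entries {A : Matrix n n 𝕜}
    (hA : ∀ i j, ∃ z : ℤ, A i j = z) (hdet : A.det ≠ 0) : 1 ≤ ‖A.det‖ := by
  choose z hz using hA
  have hAz : A.det = ((of z).det : 𝕜) := by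
    rw [← eq_intCast (Int.castRingHom 𝕜), RingHom.map_det]
    congr
    ext i j
    exact hz i j
  have hz0 : (of z).det ≠ 0 := fun h ↦ hdet (by rw [hAz, h, Int.cast_zero])
  rw [hAz, ← RCLike.ofReal_intCast, RCLike.norm_ofReal, ← Int.cast_abs]
  exact_mod_cast Int.one_le_abs hz0

theorem stmt1 (n : ℕ) (A : Matrix (Fin n) (Fin n) ℂ) (M : ℝ)
    (hint : ∀ i j, ∃ z : ℤ, A i j = (z : ℂ))
    (hM : ∀ i j, ‖A i j‖ ≤ M)
    (hA : IsUnit A.det)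
    (x b : Fin n → ℂ) (hxb : A.mulVec x = b)
    (B : ℝ) (hB : ∀ j, ‖b j‖ ≤ B) :
    ∀ i, ‖x i‖ ≤ M ^ (n - 1) * (n : ℝ) ^ ((n : ℝ) / 2) * B := by
  intro i
  have hdet : 1 ≤ ‖A.det‖ := one_le_norm_det_of_intCast_entries hint hA.ne_zero
  have hcramer : A.det * x i = (A.updateCol i b).det := by
    rw [← cramer_apply, ← hxb, cramer_mulVec, Pi.smul_apply, smul_eq_mul]
  have hbound := (A.updateCol i b).norm_det_le_sqrt_card_pow_mul_prod
    (c := Function.update (fun _ ↦ M) i B) fun k j ↦ by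
      rcases eq_or_ne j i with rfl | hj
      · simpa using hB k
      · simpa [hj] using hM k j
  rw [prod_update_of_mem (mem_univ i), prod_const, card_sdiff, inter_univ, card_singleton,
    card_univ, Fintype.card_fin] at hbound
  have hsqrt : √(n : ℝ) ^ n = (n : ℝ) ^ ((n : ℝ) / 2) := by
    rw [Real.sqrt_eq_rpow, ← Real.rpow_natCast, ← Real.rpow_mul (Nat.cast_nonneg n)]
    ring_nf
  calc ‖x i‖ ≤ ‖A.det‖ * ‖x i‖ := le_mul_of_one_le_left (norm_nonneg _) hdet
    _ = ‖(A.updateCol i b).det‖ := by rw [← norm_mul, hcramer]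
    _ ≤ √(n : ℝ) ^ n * (B * M ^ (n - 1)) := hbound
    _ = M ^ (n - 1) * (n : ℝ) ^ ((n : ℝ) / 2) * B := by rw [hsqrt]; ring
end

section
/- For every $n \in \mathbb{N}$ and every interval $J \subseteq [0, 2\pi]$, the function $D_n(\theta) = \sum_{r=0}^n \cos(r\theta)$ satisfies $\left| \int_J D_n(\theta)\, d\theta \right| \leq 10$. -/
/-!
An antiderivative of `D_n` is `θ + S_n θ`, where `S_n θ = ∑_{r=1}^n sin (r θ) / r`. For
`0 < θ ≤ π`, the terms with `r θ ≤ π` are nonnegative and each at most `θ`, so they contribute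
between `0` and `π`; the remaining tail has modulus at most `1` by Abel summation against the
bound `|∑ sin (r θ)| ≤ 1 / sin (θ / 2)` and Jordan's inequality `sin (θ / 2) ≥ θ / π`. Hence
`-1 ≤ S_n ≤ π + 1` on `[0, π]`, and since `S_n (2π - θ) = -S_n θ`, the antiderivative maps
`[0, 2π]` into `[-1, 2π + 1]`. The integral is therefore at most `2π + 2 < 10` in modulus.
-/

open Real Finset

/-- Abel's inequality, in the form with an error term that makes it provable by induction. -/
lemma abs_sum_Ioc_mul_sub_le {f g : ℕ → ℝ} {m n : ℕ} {C : ℝ} (hmn : m ≤ n)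
    (hf : ∀ k, m < k → f (k + 1) ≤ f k) (hg : ∀ k, m ≤ k → |∑ r ∈ Ioc m k, g r| ≤ C) :
    |∑ r ∈ Ioc m n, f r * g r - f (n + 1) * ∑ r ∈ Ioc m n, g r| ≤ C * (f (m + 1) - f (n + 1)) := by
  induction n, hmn using Nat.le_induction with
  | base => simp
  | succ n hmn ih =>
    have hstep : ∑ r ∈ Ioc m (n + 1), f r * g r - f (n + 1 + 1) * ∑ r ∈ Ioc m (n + 1), g r
        = (∑ r ∈ Ioc m n, f r * g r - f (n + 1) * ∑ r ∈ Ioc m n, g r)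
          + (f (n + 1) - f (n + 1 + 1)) * ∑ r ∈ Ioc m (n + 1), g r := by
      rw [sum_Ioc_succ_top hmn, sum_Ioc_succ_top hmn]
      ring
    have hdecr : 0 ≤ f (n + 1) - f (n + 1 + 1) := sub_nonneg.2 (hf _ (by omega))
    calc _ ≤ C * (f (m + 1) - f (n + 1)) + (f (n + 1) - f (n + 1 + 1)) * C := by
          rw [hstep]
          refine (abs_add_le _ _).trans (add_le_add ih ?_)
          rw [abs_mul, abs_of_nonneg hdecr]
          exact mul_le_mul_of_nonneg_left (hg _ (by omega)) hdecr
      _ = C * (f (m + 1) - f (n + 1 + 1)) := by ring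

lemma abs_sum_Ioc_mul_le {f g : ℕ → ℝ} {m n : ℕ} {C : ℝ} (hmn : m ≤ n)
    (hf : ∀ k, m < k → f (k + 1) ≤ f k) (hf₀ : ∀ k, m < k → 0 ≤ f k)
    (hg : ∀ k, m ≤ k → |∑ r ∈ Ioc m k, g r| ≤ C) :
    |∑ r ∈ Ioc m n, f r * g r| ≤ C * f (m + 1) := by
  have hpos : 0 ≤ f (n + 1) := hf₀ _ (by omega)
  calc |∑ r ∈ Ioc m n, f r * g r|
      = |(∑ r ∈ Ioc m n, f r * g r - f (n + 1) * ∑ r ∈ Ioc m n, g r)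
        + f (n + 1) * ∑ r ∈ Ioc m n, g r| := by rw [sub_add_cancel]
    _ ≤ |∑ r ∈ Ioc m n, f r * g r - f (n + 1) * ∑ r ∈ Ioc m n, g r|
        + |f (n + 1) * ∑ r ∈ Ioc m n, g r| := abs_add_le _ _
    _ ≤ C * (f (m + 1) - f (n + 1)) + f (n + 1) * C := by
        rw [abs_mul, abs_of_nonneg hpos]
        exact add_le_add (abs_sum_Ioc_mul_sub_le hmn hf hg)
          (mul_le_mul_of_nonneg_left (hg n hmn) hpos)
    _ = C * f (m + 1) := by ring

lemma sum_Ioc_sin_mul_two_mul_sin_half (x : ℝ) {m k : ℕ} (hmk : m ≤ k) :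
    (∑ r ∈ Ioc m k, sin (r * x)) * (2 * sin (x / 2))
      = cos ((m + 1 / 2) * x) - cos ((k + 1 / 2) * x) := by
  induction k, hmk using Nat.le_induction with
  | base => simp
  | succ k hmk ih =>
    have hterm : sin ((k + 1 : ℕ) * x) * (2 * sin (x / 2))
        = cos ((k + 1 / 2) * x) - cos ((k + 1 + 1 / 2) * x) := by
      rw [cos_sub_cos]
      push_cast
      rw [show ((k : ℝ) + 1 / 2) * x - (k + 1 + 1 / 2) * x = -(x / 2) * 2 by ring,
        show ((k : ℝ) + 1 / 2) * x + (k + 1 + 1 / 2) * x = (k + 1) * x * 2 by ring,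
        mul_div_cancel_right₀ _ two_ne_zero, mul_div_cancel_right₀ _ two_ne_zero, sin_neg]
      ring
    rw [sum_Ioc_succ_top hmk, add_mul, ih, hterm]
    push_cast
    ring

lemma abs_sum_Ioc_sin_le {x : ℝ} (hx : 0 < sin (x / 2)) {m k : ℕ} (hmk : m ≤ k) :
    |∑ r ∈ Ioc m k, sin (r * x)| ≤ 1 / sin (x / 2) := by
  have hmul : |∑ r ∈ Ioc m k, sin (r * x)| * (2 * sin (x / 2)) ≤ 2 := by
    rw [← abs_of_pos (by positivity : 0 < 2 * sin (x / 2)), ← abs_mul,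
      sum_Ioc_sin_mul_two_mul_sin_half x hmk]
    exact (abs_sub _ _).trans
      (by linarith [abs_cos_le_one ((m + 1 / 2) * x), abs_cos_le_one ((k + 1 / 2) * x)])
  rw [le_div_iff₀ hx]
  linarith

lemma abs_sum_Ioc_sin_div_le_one {x : ℝ} (hx₀ : 0 < x) (hxπ : x ≤ π) {m n : ℕ} (hmn : m ≤ n)
    (hm : π < (m + 1) * x) : |∑ r ∈ Ioc m n, sin (r * x) / r| ≤ 1 := by
  have hjordan : x / π ≤ sin (x / 2) := by
    have := mul_le_sin (x := x / 2) (by positivity) (by linarith)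
    calc x / π = 2 / π * (x / 2) := by ring
      _ ≤ sin (x / 2) := this
  have hsin : 0 < sin (x / 2) := (by positivity : 0 < x / π).trans_le hjordan
  have habel := abs_sum_Ioc_mul_le (f := fun r : ℕ ↦ (r : ℝ)⁻¹) (g := fun r ↦ sin (r * x)) hmn
    (fun k hk ↦ inv_anti₀ (Nat.cast_pos.2 (by omega)) (by simp)) (fun _ _ ↦ by positivity)
    (fun _ hk ↦ abs_sum_Ioc_sin_le hsin hk)
  simp only [div_eq_inv_mul]
  refine habel.trans ?_
  have hgrowth : 1 ≤ sin (x / 2) * (m + 1) :=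
    calc (1 : ℝ) ≤ x / π * (m + 1) := by
          rw [div_mul_eq_mul_div, le_div_iff₀ pi_pos]; linarith
      _ ≤ sin (x / 2) * (m + 1) := by gcongr
  push_cast
  rw [one_div, ← mul_inv, inv_le_one₀ (by positivity)]
  exact hgrowth

lemma sum_Ioc_sin_div_nonneg {x : ℝ} (hx : 0 ≤ x) {m : ℕ} (hm : m * x ≤ π) :
    0 ≤ ∑ r ∈ Ioc 0 m, sin (r * x) / r := by
  refine sum_nonneg fun r hr ↦ div_nonneg (sin_nonneg_of_nonneg_of_le_pi (by positivity) ?_)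
    r.cast_nonneg
  have hrm : (r : ℝ) ≤ m := by exact_mod_cast (mem_Ioc.1 hr).2
  nlinarith

lemma sum_Ioc_sin_div_le {x : ℝ} (hx : 0 ≤ x) (m : ℕ) :
    ∑ r ∈ Ioc 0 m, sin (r * x) / r ≤ m * x := by
  calc ∑ r ∈ Ioc 0 m, sin (r * x) / r ≤ ∑ _r ∈ Ioc 0 m, x := by
        refine sum_le_sum fun r hr ↦ ?_
        have hr₀ : (0 : ℝ) < r := Nat.cast_pos.2 (mem_Ioc.1 hr).1
        rw [div_le_iff₀ hr₀, mul_comm x]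
        exact sin_le (by positivity)
    _ = m * x := by simp

/-- Partial sum of the Fourier series `∑ sin (r x) / r` of the sawtooth wave `(π - x) / 2`. -/
noncomputable def sawtoothSum (n : ℕ) (x : ℝ) : ℝ := ∑ r ∈ Ioc 0 n, sin (r * x) / r

lemma sawtoothSum_mem_Icc (n : ℕ) {x : ℝ} (hx₀ : 0 ≤ x) (hxπ : x ≤ π) :
    sawtoothSum n x ∈ Set.Icc (-1) (π + 1) := by
  rw [sawtoothSum]
  rcases hx₀.eq_or_lt with rfl | hx₀
  · simp only [mul_zero, sin_zero, zero_div, sum_const_zero, Set.mem_Icc]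
    constructor <;> linarith [pi_pos]
  set m := ⌊π / x⌋₊
  have hm : m * x ≤ π := (le_div_iff₀ hx₀).1 (Nat.floor_le (by positivity))
  have hm' : π < (m + 1) * x := (div_lt_iff₀ hx₀).1 (Nat.lt_floor_add_one _)
  rcases le_or_gt n m with hnm | hmn
  · have hn : n * x ≤ π := le_trans (by gcongr) hm
    constructor
    · linarith [sum_Ioc_sin_div_nonneg hx₀.le hn]
    · linarith [sum_Ioc_sin_div_le hx₀.le n, pi_pos]
  · have htail := abs_le.1 (abs_sum_Ioc_sin_div_le_one hx₀ hxπ hmn.le hm')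
    rw [← sum_Ioc_consecutive _ m.zero_le hmn.le]
    constructor
    · linarith [sum_Ioc_sin_div_nonneg hx₀.le hm]
    · linarith [sum_Ioc_sin_div_le hx₀.le m]

lemma sawtoothSum_two_pi_sub (n : ℕ) (x : ℝ) : sawtoothSum n (2 * π - x) = -sawtoothSum n x := by
  rw [sawtoothSum, sawtoothSum, ← sum_neg_distrib]
  refine sum_congr rfl fun r _ ↦ ?_
  rw [show (r : ℝ) * (2 * π - x) = -(r * x) + (r : ℤ) * (2 * π) by push_cast; ring,
    sin_add_int_mul_two_pi, sin_neg, neg_div]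

lemma add_sawtoothSum_mem_Icc (n : ℕ) {x : ℝ} (hx₀ : 0 ≤ x) (hx : x ≤ 2 * π) :
    x + sawtoothSum n x ∈ Set.Icc (-1) (2 * π + 1) := by
  rcases le_or_gt x π with hxπ | hπx
  · obtain ⟨h₁, h₂⟩ := sawtoothSum_mem_Icc n hx₀ hxπ
    constructor <;> linarith
  · obtain ⟨h₁, h₂⟩ := sawtoothSum_mem_Icc n (x := 2 * π - x) (by linarith) (by linarith)
    rw [sawtoothSum_two_pi_sub] at h₁ h₂
    constructor <;> linarith

lemma hasDerivAt_add_sawtoothSum (n : ℕ) (x : ℝ) :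
    HasDerivAt (fun t ↦ t + sawtoothSum n t) (∑ r ∈ range (n + 1), cos (r * x)) x := by
  have hterm (r : ℕ) (hr : r ∈ Ioc 0 n) :
      HasDerivAt (fun t ↦ sin (r * t) / r) (cos (r * x)) x := by
    have hr₀ : (r : ℝ) ≠ 0 := Nat.cast_ne_zero.2 (mem_Ioc.1 hr).1.ne'
    simpa [hr₀] using ((hasDerivAt_id x).const_mul (r : ℝ)).sin.div_const (r : ℝ)
  rw [Nat.range_succ_eq_Icc_zero, ← sum_Ioc_add_eq_sum_Icc n.zero_le, add_comm, Nat.cast_zero,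
    zero_mul, cos_zero]
  exact (hasDerivAt_id' x).fun_add (HasDerivAt.fun_sum hterm)

theorem stmt4 (n : ℕ) (a b : ℝ) (ha : 0 ≤ a) (hab : a ≤ b) (hb : b ≤ 2 * Real.pi) :
    |∫ θ in a..b, ∑ r ∈ Finset.range (n + 1), Real.cos (r * θ)| ≤ 10 := by
  have hcont : Continuous fun θ : ℝ ↦ ∑ r ∈ range (n + 1), cos (r * θ) := by fun_prop
  rw [intervalIntegral.integral_eq_sub_of_hasDerivAt
    (fun x _ ↦ hasDerivAt_add_sawtoothSum n x) (hcont.intervalIntegrable a b)]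
  obtain ⟨ha₁, ha₂⟩ := add_sawtoothSum_mem_Icc n ha (hab.trans hb)
  obtain ⟨hb₁, hb₂⟩ := add_sawtoothSum_mem_Icc n (ha.trans hab) hb
  rw [abs_le]
  constructor <;> linarith [pi_le_four]
end

section
/- Let $f$ be a trigonometric polynomial and $k \in \mathbb{N}$, and let $S_k(\theta) = \prod_{r=1}^k (1 - e^{ir\theta})$. If the sequence of Fourier coefficients $(\hat{f}(r))_{r \in [N, M]}$ is periodic with period $p \leq k$ (i.e., $\hat{f}(r + p) = \hat{f}(r)$ whenever $r, r + p \in [N, M]$), then the product $S_k f$ satisfies $\widehat{S_k f}(r) = 0$ for all $r \in [N + \deg(S_k), M]$, where $\deg(S_k) = k(k+1)/2$. -/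
instance : Fact (0 < 2 * Real.pi) := ⟨by positivity⟩

/-!
Since `p ≤ k`, the factor `1 - e^{ipθ}` occurs in `S_k`. Multiplying `f` by it replaces `f̂(r)` by
`f̂(r) - f̂(r - p)`, which vanishes for `r ∈ [N + p, M]` by periodicity. Multiplying by each remaining
factor `1 - e^{ijθ}` only moves the left end of an interval of vanishing coefficients `j` steps to the
right, and the remaining factors have degrees summing to `k(k+1)/2 - p`.
-/

open MeasureTheory Finset AddCircle

lemma Finset.sum_Icc_one_intCast_mul_two (k : ℕ) : (∑ j ∈ Icc 1 k, (j : ℤ)) * 2 = k * (k + 1) := by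
  induction k with
  | zero => simp
  | succ k ih =>
    rw [sum_Icc_succ_top (by omega), add_mul, ih]
    push_cast
    ring

lemma Finset.sum_Icc_one_intCast (k : ℕ) : ∑ j ∈ Icc 1 k, (j : ℤ) = k * (k + 1) / 2 :=
  (Int.ediv_eq_of_eq_mul_left two_ne_zero (sum_Icc_one_intCast_mul_two k).symm).symm

namespace AddCircle

variable {T : ℝ} [Fact (0 < T)] {g : AddCircle T → ℂ}

lemma fourierCoeff_fourier_mul (m n : ℤ) :
    fourierCoeff (fun x => fourier m x * g x) n = fourierCoeff g (n - m) := by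
  simp only [fourierCoeff, smul_eq_mul, ← mul_assoc, ← fourier_add]
  ring_nf

lemma _root_.MeasureTheory.Integrable.one_sub_fourier_mul (hg : Integrable g haarAddCircle)
    (j : ℤ) : Integrable (fun x => (1 - fourier j x) * g x) haarAddCircle := by
  refine (hg.sub (hg.fourier_smul j)).congr (.of_forall fun x => ?_)
  simp [sub_mul]

lemma fourierCoeff_one_sub_fourier_mul (hg : Integrable g haarAddCircle) (j n : ℤ) :
    fourierCoeff (fun x => (1 - fourier j x) * g x) n =
      fourierCoeff g n - fourierCoeff g (n - j) := by
  rw [← fourierCoeff_fourier_mul]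
  simp only [fourierCoeff, sub_mul, one_mul, smul_sub]
  exact integral_sub (hg.fourier_smul _) ((hg.fourier_smul j).fourier_smul _)

lemma fourierCoeff_one_sub_fourier_mul_eq_zero (hg : Integrable g haarAddCircle) {j : ℕ} {a b : ℤ}
    (h : ∀ r ∈ Set.Icc a b, fourierCoeff g r = 0) :
    ∀ r ∈ Set.Icc (a + j) b, fourierCoeff (fun x => (1 - fourier (j : ℤ) x) * g x) r = 0 := by
  rintro r ⟨har, hrb⟩
  rw [fourierCoeff_one_sub_fourier_mul hg, h r ⟨by omega, hrb⟩, h (r - j) ⟨by omega, by omega⟩,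
    sub_zero]

lemma fourierCoeff_one_sub_fourier_mul_eq_zero_of_periodic (hg : Integrable g haarAddCircle)
    {N M p : ℤ} (hper : ∀ r, N ≤ r → r + p ≤ M → fourierCoeff g (r + p) = fourierCoeff g r) :
    ∀ r ∈ Set.Icc (N + p) M, fourierCoeff (fun x => (1 - fourier p x) * g x) r = 0 := by
  rintro r ⟨hNr, hrM⟩
  rw [fourierCoeff_one_sub_fourier_mul hg, ← hper (r - p) (by omega) (by omega), sub_add_cancel,
    sub_self]

lemma _root_.MeasureTheory.Integrable.prod_one_sub_fourier_mul (hg : Integrable g haarAddCircle)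
    (J : Finset ℕ) :
    Integrable (fun x => (∏ j ∈ J, (1 - fourier (j : ℤ) x)) * g x) haarAddCircle := by
  induction J using Finset.induction_on with
  | empty => simpa using hg
  | insert j J hj ih => simpa only [prod_insert hj, mul_assoc] using ih.one_sub_fourier_mul j

lemma fourierCoeff_prod_one_sub_fourier_mul_eq_zero (hg : Integrable g haarAddCircle)
    (J : Finset ℕ) {a b : ℤ} (h : ∀ r ∈ Set.Icc a b, fourierCoeff g r = 0) :
    ∀ r ∈ Set.Icc (a + ∑ j ∈ J, (j : ℤ)) b,
      fourierCoeff (fun x => (∏ j ∈ J, (1 - fourier (j : ℤ) x)) * g x) r = 0 := by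
  induction J using Finset.induction_on with
  | empty => simpa using h
  | insert j J hj ih =>
    intro r ⟨har, hrb⟩
    simp only [prod_insert hj, mul_assoc]
    refine fourierCoeff_one_sub_fourier_mul_eq_zero (hg.prod_one_sub_fourier_mul J) ih r ⟨?_, hrb⟩
    rw [sum_insert hj] at har
    omega

end AddCircle

theorem stmt7_general (k : ℕ) (N M p : ℤ) (hp : 1 ≤ p)
    (hpk : p ≤ (k : ℤ))
    (f : AddCircle (2 * Real.pi) → ℂ) (s : Finset ℤ) (c : ℤ → ℂ)
    (hf : ∀ x, f x = ∑ r ∈ s, c r * fourier r x)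
    (hper : ∀ r : ℤ, N ≤ r → r + p ≤ M → fourierCoeff f (r + p) = fourierCoeff f r) :
    ∀ r : ℤ, N + (k * (k + 1) : ℤ) / 2 ≤ r → r ≤ M →
      fourierCoeff (fun x => (∏ j ∈ Finset.Icc 1 k, (1 - fourier (j : ℤ) x)) * f x) r = 0 := by
  intro r hNr hrM
  lift p to ℕ using (by omega)
  have hf_int : Integrable f haarAddCircle := by
    rw [funext hf]
    exact integrable_finsetSum _ fun r _ =>
      ((map_continuous _).integrable_of_hasCompactSupport (.of_compactSpace _)).const_mul _
  have hp_mem : p ∈ Icc 1 k := mem_Icc.2 ⟨by omega, by omega⟩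
  have hdeg : N + p + ∑ j ∈ (Icc 1 k).erase p, (j : ℤ) = N + k * (k + 1) / 2 := by
    rw [← sum_Icc_one_intCast, ← add_sum_erase _ _ hp_mem, add_assoc]
  have hfactor : (fun x => (∏ j ∈ Icc 1 k, (1 - fourier (j : ℤ) x)) * f x) = fun x =>
      (∏ j ∈ (Icc 1 k).erase p, (1 - fourier (j : ℤ) x)) * ((1 - fourier (p : ℤ) x) * f x) := by
    funext x
    rw [← prod_erase_mul _ _ hp_mem, mul_assoc]
  rw [hfactor]
  exact fourierCoeff_prod_one_sub_fourier_mul_eq_zero (hf_int.one_sub_fourier_mul p) _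
    (fourierCoeff_one_sub_fourier_mul_eq_zero_of_periodic hf_int hper) r ⟨hdeg ▸ hNr, hrM⟩

theorem stmt7 (k : ℕ) (hk : 1 ≤ k) (N M p : ℤ) (hNM : N < M) (hp : 1 ≤ p)
    (hpk : p ≤ (k : ℤ))
    (f : AddCircle (2 * Real.pi) → ℂ) (s : Finset ℤ) (c : ℤ → ℂ)
    (hf : ∀ x, f x = ∑ r ∈ s, c r * fourier r x)
    (hper : ∀ r : ℤ, N ≤ r → r + p ≤ M → fourierCoeff f (r + p) = fourierCoeff f r) :
    ∀ r : ℤ, N + (k * (k + 1) : ℤ) / 2 ≤ r → r ≤ M →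
      fourierCoeff (fun x => (∏ j ∈ Finset.Icc 1 k, (1 - fourier (j : ℤ) x)) * f x) r = 0 :=
  stmt7_general k N M p hp hpk f s c hf hper
end

section
/- Let $R \subseteq \mathbb{C}$ be a finite set, and let $N, t \in \mathbb{N}$ satisfy $N \geq |R|^{t+1} + 3(t+1)$. Let $x = (x(r))_{r=1}^N \in R^N$. Suppose the non-zero vector $v = (C_0, \ldots, C_t) \in \mathbb{C}^{t+1}$ is orthogonal to every $(t+1)$-window $(x(1+r), \ldots, x(t+1+r))$, $0 \leq r \leq N - t - 1$, of $x$. Then there exist $l \leq t$, complex numbers $\alpha_1, \ldots, \alpha_l$, and roots of unity $\rho_1, \ldots, \rho_l$ which are zeros of $P(X) = C_0 + C_1 X + \cdots + C_t X^t$, such that $x(r) = \alpha_1 \rho_1^r + \cdots + \alpha_l \rho_l^r$ for all $r \in [t+1, N - (t+1)]$. -/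
/-!
Let `a ≤ b` be the least and the greatest index with `C a ≠ 0` and `C b ≠ 0`. Because both
extreme coefficients are nonzero, the recurrence determines each window
`(x (s + a), …, x (s + b))` from its neighbour on either side. There are at most
`|R| ^ (t + 1)` windows, so two of them coincide, and hence `x` is periodic with some period
`p ≤ |R| ^ (t + 1)` on the whole range.

A periodic `x` is a function on `ZMod p`, so it is a combination of additive characters `ψ`,
with `ψ n = (ψ 1) ^ n` and `ψ 1` a `p`-th root of unity. The recurrence multiplies `ψ` by
`P (ψ 1)`, so by linear independence of characters `P (ψ 1) = 0` for every `ψ` that occurs.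
Distinct characters have distinct values `ψ 1`, so at most `deg P ≤ t` characters occur.
-/

open Finset Function

theorem forall_of_forall_succ_iff {Q : ℕ → Prop} {lo hi n : ℕ}
    (hstep : ∀ s, lo ≤ s → s < hi → (Q s ↔ Q (s + 1))) (hn : lo ≤ n) (hnhi : n ≤ hi) (hQ : Q n) :
    ∀ s, lo ≤ s → s ≤ hi → Q s := by
  have hlo : ∀ s, lo ≤ s → s ≤ hi → (Q lo ↔ Q s) := by
    intro s hs
    induction s, hs using Nat.le_induction with
    | base => exact fun _ => Iff.rfl
    | succ s hs ih => exact fun hshi => (ih (by omega)).trans (hstep s hs (by omega))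
  exact fun s hs hshi => (hlo s hs hshi).1 ((hlo n hn hnhi).2 hQ)

theorem exists_lt_eq_of_mapsTo_Icc {β : Type*} {f : ℕ → β} {T : Finset β} {lo : ℕ}
    (hf : ∀ n, lo ≤ n → n ≤ lo + #T → f n ∈ T) :
    ∃ n m, lo ≤ n ∧ n < m ∧ m ≤ lo + #T ∧ f n = f m := by
  obtain ⟨n, hn, m, hm, hnm, hfnm⟩ := exists_ne_map_eq_of_card_lt_of_maps_to
    (s := Icc lo (lo + #T)) (by rw [Nat.card_Icc]; omega)
    fun n hn => hf n (mem_Icc.1 hn).1 (mem_Icc.1 hn).2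
  rw [mem_Icc] at hn hm
  rcases Nat.lt_or_gt_of_ne hnm with h | h
  · exact ⟨n, m, hn.1, h, hm.2, hfnm⟩
  · exact ⟨m, n, hm.1, h, hn.2, hfnm.symm⟩

theorem eq_of_sum_mul_eq_zero {K ι : Type*} [Ring K] [NoZeroDivisors K] {s : Finset ι}
    {C u v : ι → K} (hu : ∑ j ∈ s, C j * u j = 0) (hv : ∑ j ∈ s, C j * v j = 0) {k : ι} (hk : k ∈ s)
    (hCk : C k ≠ 0) (huv : ∀ j ∈ s, j ≠ k → u j = v j) : u k = v k := by
  have hdiff : ∑ j ∈ s, C j * (u j - v j) = C k * (u k - v k) :=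
    sum_eq_single_of_mem k hk fun j hj hjk => by rw [huv j hj hjk, sub_self, mul_zero]
  have hk0 : C k * (u k - v k) = 0 := by
    rw [← hdiff]
    simp only [mul_sub, sum_sub_distrib, hu, hv, sub_zero]
  exact sub_eq_zero.1 ((mul_eq_zero.1 hk0).resolve_left hCk)

theorem exists_sum_range_eq_sum_Icc {K : Type*} [Semiring K] {C : ℕ → K} {t : ℕ}
    (hC : ∃ j ≤ t, C j ≠ 0) :
    ∃ a b, a ≤ b ∧ b ≤ t ∧ C a ≠ 0 ∧ C b ≠ 0 ∧
      ∀ y : ℕ → K, ∑ j ∈ range (t + 1), C j * y j = ∑ j ∈ Icc a b, C j * y j := by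
  classical
  set T := (range (t + 1)).filter (C · ≠ 0)
  have hT : T.Nonempty := by
    obtain ⟨j, hjt, hCj⟩ := hC
    exact ⟨j, mem_filter.2 ⟨mem_range.2 (by omega), hCj⟩⟩
  obtain ⟨hbt, hb⟩ := mem_filter.1 (T.max'_mem hT)
  refine ⟨T.min' hT, T.max' hT, T.min'_le _ (T.max'_mem hT), by rw [mem_range] at hbt; omega,
    (mem_filter.1 (T.min'_mem hT)).2, hb,
    fun y => (sum_subset (fun j hj => ?_) fun j hjt hj => ?_).symm⟩
  · simp only [mem_range, mem_Icc] at hj hbt ⊢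
    omega
  · by_contra hCj
    have hjT : j ∈ T := mem_filter.2 ⟨hjt, left_ne_zero_of_mul hCj⟩
    exact hj (mem_Icc.2 ⟨T.min'_le j hjT, T.le_max' j hjT⟩)

section Window

variable {K : Type*} [Ring K] [NoZeroDivisors K] {x C : ℕ → K}

theorem window_shift_eq_iff_succ {a b M : ℕ} (hab : a ≤ b) (ha : C a ≠ 0) (hb : C b ≠ 0)
    (hrec : ∀ s, 1 ≤ s → s ≤ M → ∑ j ∈ Icc a b, C j * x (s + j) = 0)
    {p s : ℕ} (hs : 1 ≤ s) (hsM : s + 1 + p ≤ M) :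
    (∀ j ∈ Icc a b, x (s + j) = x (s + p + j)) ↔
      ∀ j ∈ Icc a b, x (s + 1 + j) = x (s + 1 + p + j) := by
  constructor
  · intro h
    have hlt : ∀ j ∈ Icc a b, j ≠ b → x (s + 1 + j) = x (s + 1 + p + j) := fun j hj hjb => by
      rw [mem_Icc] at hj
      rw [add_right_comm s 1 p, add_assoc, add_assoc, add_comm 1 j]
      exact h (j + 1) (mem_Icc.2 ⟨by omega, by omega⟩)
    intro j hj
    by_cases hjb : j = b
    · subst hjb
      exact eq_of_sum_mul_eq_zero (hrec (s + 1) (by omega) (by omega))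
        (hrec (s + 1 + p) (by omega) hsM) (right_mem_Icc.2 hab) hb hlt
    · exact hlt j hj hjb
  · intro h
    have hgt : ∀ j ∈ Icc a b, j ≠ a → x (s + j) = x (s + p + j) := fun j hj hja => by
      rw [mem_Icc] at hj
      have := h (j - 1) (mem_Icc.2 ⟨by omega, by omega⟩)
      rwa [add_right_comm s 1 p, add_assoc, add_assoc, Nat.add_sub_cancel' (by omega)] at this
    intro j hj
    by_cases hja : j = a
    · subst hja
      exact eq_of_sum_mul_eq_zero (hrec s hs (by omega))
        (hrec (s + p) (by omega) (by omega)) (left_mem_Icc.2 hab) ha hgt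
    · exact hgt j hj hja

theorem exists_window_period {a b M : ℕ} (R : Finset K) (hab : a ≤ b) (ha : C a ≠ 0) (hb : C b ≠ 0)
    (hrec : ∀ s, 1 ≤ s → s ≤ M → ∑ j ∈ Icc a b, C j * x (s + j) = 0)
    (hx : ∀ n, 1 ≤ n → n ≤ M + b → x n ∈ R) (hM : #R ^ (b + 1 - a) < M) :
    ∃ p, 0 < p ∧ p ≤ #R ^ (b + 1 - a) ∧
      ∀ s, 1 ≤ s → s + p ≤ M → ∀ j ∈ Icc a b, x (s + j) = x (s + p + j) := by
  classical
  have hcard : #(Fintype.piFinset fun _ : Icc a b => R) = #R ^ (b + 1 - a) := by simp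
  obtain ⟨n, m, hn, hnm, hm, hW⟩ := exists_lt_eq_of_mapsTo_Icc
    (f := fun s (j : Icc a b) => x (s + j)) (T := Fintype.piFinset fun _ => R) (lo := 1)
    fun n hn hnT => Fintype.mem_piFinset.2 fun j => by
      have := (mem_Icc.1 j.2).2
      exact hx _ (by omega) (by omega)
  refine ⟨m - n, by omega, by omega, fun s hs hsM => ?_⟩
  refine forall_of_forall_succ_iff (Q := fun s => ∀ j ∈ Icc a b, x (s + j) = x (s + (m - n) + j))
    (hi := M - (m - n)) (fun s hs hsM => window_shift_eq_iff_succ hab ha hb hrec hs (by omega))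
    hn (by omega) (fun j hj => ?_) s hs (by omega)
  rw [show n + (m - n) = m by omega]
  exact congrFun hW ⟨j, hj⟩

theorem exists_period_of_sum_range_eq_zero {t N : ℕ} (R : Finset K) (hC : ∃ j ≤ t, C j ≠ 0)
    (hx : ∀ n, 1 ≤ n → n ≤ N → x n ∈ R)
    (hrec : ∀ s, 1 ≤ s → s + t ≤ N → ∑ j ∈ range (t + 1), C j * x (s + j) = 0)
    (hN : #R ^ (t + 1) + t < N) :
    ∃ p, 0 < p ∧ p ≤ #R ^ (t + 1) ∧ ∀ r, t + 1 ≤ r → r + p + t ≤ N → x r = x (r + p) := by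
  obtain ⟨a, b, hab, hbt, ha, hb, hsum⟩ := exists_sum_range_eq_sum_Icc hC
  have hR : 0 < #R := card_pos.2 ⟨x 1, hx 1 le_rfl (by omega)⟩
  have hpow : #R ^ (b + 1 - a) ≤ #R ^ (t + 1) := Nat.pow_le_pow_right hR (by omega)
  obtain ⟨p, hp, hpR, hper⟩ := exists_window_period (M := N - t) R hab ha hb
    (fun s hs hsN => hsum (fun j => x (s + j)) ▸ hrec s hs (by omega))
    (fun n hn hnN => hx n hn (by omega)) (by omega)
  refine ⟨p, hp, hpR.trans hpow, fun r hr hrN => ?_⟩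
  have := hper (r - a) (by omega) (by omega) a (left_mem_Icc.2 hab)
  rwa [Nat.sub_add_cancel (by omega), add_right_comm, Nat.sub_add_cancel (by omega)] at this

end Window

theorem exists_zmod_eq_of_add_period {α : Type*} {x : ℕ → α} {p lo hi : ℕ} [NeZero p]
    (hper : ∀ r, lo ≤ r → r + p ≤ hi → x r = x (r + p)) :
    ∃ f : ZMod p → α, ∀ n, lo ≤ n → n ≤ hi → f n = x n := by
  have hiter : ∀ k r, lo ≤ r → r + k * p ≤ hi → x r = x (r + k * p) := by
    intro k
    induction k with
    | zero => simp
    | succ k ih =>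
      intro r hr hrhi
      rw [ih r hr (by nlinarith), hper _ (by omega) (by nlinarith), add_assoc, ← Nat.succ_mul]
  refine ⟨fun z => x (lo + (z - lo).val), fun n hn hnhi => ?_⟩
  have hmod : lo + (n - lo) % p + (n - lo) / p * p = n := by
    rw [add_assoc, Nat.mod_add_div']; omega
  show x (lo + ((n : ZMod p) - lo).val) = x n
  rw [← Nat.cast_sub hn, ZMod.val_natCast, hiter ((n - lo) / p) _ (by omega) (by omega), hmod]

theorem sum_zmod_eq_zero_of_eqOn {K : Type*} [Semiring K] {x C : ℕ → K} {p t lo : ℕ} [NeZero p]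
    (f : ZMod p → K) (hfx : ∀ n, lo ≤ n → n < lo + p + t → f n = x n)
    (hrec : ∀ s, lo ≤ s → s < lo + p → ∑ j ∈ range (t + 1), C j * x (s + j) = 0) (z : ZMod p) :
    ∑ j ∈ range (t + 1), C j * f (z + j) = 0 := by
  set s := lo + (z - lo).val
  have hsz : (s : ZMod p) = z := by simp [s]
  have hsp : (z - lo).val < p := ZMod.val_lt _
  calc ∑ j ∈ range (t + 1), C j * f (z + j) = ∑ j ∈ range (t + 1), C j * x (s + j) :=
        sum_congr rfl fun j hj => by
          rw [mem_range] at hj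
          rw [← hsz, ← Nat.cast_add, hfx _ (by omega) (by omega)]
    _ = 0 := hrec s (by omega) (by omega)

section Characters

variable {p : ℕ} {M : Type*} [CommMonoid M]

theorem AddChar.zmod_apply_natCast (ψ : AddChar (ZMod p) M) (n : ℕ) : ψ n = ψ 1 ^ n := by
  rw [← ψ.map_nsmul_eq_pow, nsmul_one]

theorem AddChar.zmod_apply_one_pow (ψ : AddChar (ZMod p) M) : ψ 1 ^ p = 1 := by
  rw [← ψ.zmod_apply_natCast, ZMod.natCast_self, map_zero_eq_one]

theorem AddChar.zmod_apply_one_injective [NeZero p] :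
    Injective fun ψ : AddChar (ZMod p) M => ψ 1 := by
  intro ψ χ h
  ext z
  rw [← ZMod.natCast_zmod_val z, ψ.zmod_apply_natCast, χ.zmod_apply_natCast]
  exact congrArg (· ^ z.val) h

end Characters

open Polynomial in
theorem card_le_of_forall_sum_mul_pow_eq_zero {K : Type*} [CommRing K] [IsDomain K] {C : ℕ → K}
    {t : ℕ} (hC : ∃ j ≤ t, C j ≠ 0) {Z : Finset K}
    (hZ : ∀ z ∈ Z, ∑ j ∈ range (t + 1), C j * z ^ j = 0) : #Z ≤ t := by
  classical
  set P : K[X] := ∑ j ∈ range (t + 1), monomial j (C j)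
  have hP : P ≠ 0 := by
    obtain ⟨j, hjt, hCj⟩ := hC
    intro h
    have := congrArg (coeff · j) h
    simp [P, coeff_monomial] at this
    exact hCj (this (by omega))
  have hdeg : P.natDegree ≤ t := natDegree_sum_le_of_forall_le _ _ fun j hj =>
    (natDegree_monomial_le _).trans (by rw [mem_range] at hj; omega)
  calc #Z ≤ P.natDegree := card_le_degree_of_subset_roots fun z hz =>
        (mem_roots hP).2 (by simpa [P, eval_finsetSum] using hZ z hz)
    _ ≤ t := hdeg

theorem exists_sum_pow_of_sum_shift_eq_zero {p t : ℕ} [NeZero p] {C : ℕ → ℂ}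
    (hC : ∃ j ≤ t, C j ≠ 0) (f : ZMod p → ℂ) (hf : ∀ z, ∑ j ∈ range (t + 1), C j * f (z + j) = 0) :
    ∃ l ≤ t, ∃ α ρ : Fin l → ℂ, (∀ i, ρ i ^ p = 1) ∧
      (∀ i, ∑ j ∈ range (t + 1), C j * ρ i ^ j = 0) ∧ ∀ n : ℕ, f n = ∑ i, α i * ρ i ^ n := by
  classical
  set c := (AddChar.complexBasis (ZMod p)).repr f
  have hfc : ∀ z, f z = ∑ ψ, c ψ * ψ z := fun z => by
    conv_lhs => rw [← (AddChar.complexBasis (ZMod p)).sum_repr f]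
    simp [c]
  have hroot : ∀ ψ, c ψ ≠ 0 → ∑ j ∈ range (t + 1), C j * ψ 1 ^ j = 0 := by
    have hshift : ∑ ψ, (c ψ * ∑ j ∈ range (t + 1), C j * ψ 1 ^ j) • ⇑ψ = 0 := by
      ext z
      calc (∑ ψ : AddChar (ZMod p) ℂ, (c ψ * ∑ j ∈ range (t + 1), C j * ψ 1 ^ j) • ⇑ψ) z
          = ∑ j ∈ range (t + 1), C j * f (z + j) := by
            simp only [Finset.sum_apply, Pi.smul_apply, smul_eq_mul, hfc, mul_sum, sum_mul,
              AddChar.map_add_eq_mul, AddChar.zmod_apply_natCast]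
            rw [sum_comm]
            exact sum_congr rfl fun _ _ => sum_congr rfl fun _ _ => by ring
        _ = 0 := hf z
    intro ψ hψ
    have := Fintype.linearIndependent_iff.1 (AddChar.linearIndependent (ZMod p) ℂ) _ hshift ψ
    exact (mul_eq_zero.1 this).resolve_left hψ
  set S := univ.filter fun ψ => c ψ ≠ 0
  have hS : #S ≤ t := by
    rw [← card_image_of_injective S AddChar.zmod_apply_one_injective]
    refine card_le_of_forall_sum_mul_pow_eq_zero hC fun z hz => ?_
    obtain ⟨ψ, hψ, rfl⟩ := mem_image.1 hz
    exact hroot ψ (mem_filter.1 hψ).2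
  refine ⟨#S, hS, fun i => c (S.equivFin.symm i),
    fun i => (S.equivFin.symm i : AddChar (ZMod p) ℂ) 1,
    fun i => AddChar.zmod_apply_one_pow _, fun i => hroot _ (mem_filter.1 (S.equivFin.symm i).2).2,
    fun n => ?_⟩
  calc f n = ∑ ψ ∈ S, c ψ * ψ 1 ^ n := by
        rw [hfc, sum_filter_of_ne fun ψ _ h => left_ne_zero_of_mul h]
        simp only [AddChar.zmod_apply_natCast]
    _ = _ := by
        rw [← sum_coe_sort]
        exact (Equiv.sum_comp S.equivFin.symm
          fun ψ : S => c ψ * (ψ : AddChar (ZMod p) ℂ) 1 ^ n).symm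

theorem stmt8 (N t : ℕ) (R : Finset ℂ) (x : ℕ → ℂ) (C : ℕ → ℂ)
    (hN : R.card ^ (t + 1) + 3 * (t + 1) ≤ N)
    (hx : ∀ n, 1 ≤ n → n ≤ N → x n ∈ R)
    (hC : ∃ j ≤ t, C j ≠ 0)
    (horth : ∀ r, r + (t + 1) ≤ N →
      ∑ j ∈ Finset.range (t + 1), C j * x (1 + r + j) = 0) :
    ∃ l, l ≤ t ∧ ∃ α ρ : Fin l → ℂ,
      (∀ i, ∃ q, 1 ≤ q ∧ ρ i ^ q = 1) ∧
      (∀ i, ∑ j ∈ Finset.range (t + 1), C j * ρ i ^ j = 0) ∧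
      (∀ r, t + 1 ≤ r → r ≤ N - (t + 1) → x r = ∑ i, α i * ρ i ^ r) := by
  have hrec : ∀ s, 1 ≤ s → s + t ≤ N → ∑ j ∈ range (t + 1), C j * x (s + j) = 0 :=
    fun s hs hsN => by simpa [Nat.add_sub_cancel' hs] using horth (s - 1) (by omega)
  obtain ⟨p, hp, hpR, hper⟩ := exists_period_of_sum_range_eq_zero R hC hx hrec (by omega)
  have : NeZero p := ⟨hp.ne'⟩
  obtain ⟨f, hfx⟩ := exists_zmod_eq_of_add_period (lo := t + 1) (hi := N - t) (x := x)
    fun r hr hrN => hper r hr (by omega)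
  have hf := sum_zmod_eq_zero_of_eqOn f (fun n hn hnN => hfx n hn (by omega))
    fun s hs hsp => hrec s (by omega) (by omega)
  obtain ⟨l, hl, α, ρ, hρp, hρC, hfρ⟩ := exists_sum_pow_of_sum_shift_eq_zero hC f hf
  exact ⟨l, hl, α, ρ, fun i => ⟨p, hp, hρp i⟩, hρC, fun r hr hrN => by
    rw [← hfx r hr (by omega), hfρ]⟩
end

section
/- For all integers $n > 3$, Euler's totient function satisfies $\varphi(n) \geq n / (8 \log_2 \log_2 n)$. -/
/-!
Euler's product gives `φ n / n = ∏_{p ∣ n} (1 - 1/p) ≥ exp (-∑_{p ∣ n} 1/(p - 1))`, so it suffices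
to bound `S n = ∑_{p ∣ n} 1/(p - 1)` by `log (8 log₂ log₂ n)`. Take `N = ⌊log₂ n⌋`. Since
`n < 2 ^ (N + 1) ≤ 16 ^ (N / 4 + 1)`, at most `N / 4` primes above `N` divide `n`, contributing at
most `1/4` to `S n`. The primes up to `N` contribute at most `log (log₁₆ N) + 253/80` by an
elementary Mertens estimate: Legendre's formula for `N!` and Chebyshev's `θ N ≤ N log 4` give
`∑_{p ≤ N} log p / p ≤ log N + log 4`, and partial summation turns this into the bound on
`∑_{p ≤ N} 1/(p - 1)`. As `log (8 log₂ N) = 5 log 2 + log (log₁₆ N)` and `253/80 + 1/4 < 5 log 2`,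
this settles `N ≥ 16`; for smaller `N`, splitting the primes at `10` instead suffices.
-/

open Finset Real
open Nat (primesLE mem_primesLE)

theorem div_le_factorization_factorial {N p : ℕ} (hp : p.Prime) (hpN : p ≤ N) :
    N / p ≤ N.factorial.factorization p := by
  rw [Nat.factorization_factorial hp (Nat.lt_succ_self _)]
  simpa using single_le_sum (f := fun i ↦ N / p ^ i) (fun _ _ ↦ Nat.zero_le _)
    (mem_Ico.mpr ⟨le_rfl, Nat.succ_lt_succ (Nat.log_pos hp.one_lt hpN)⟩)

theorem sum_primesLE_div_mul_log_le_log_factorial (N : ℕ) :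
    ∑ p ∈ primesLE N, ((N / p : ℕ) : ℝ) * log p ≤ log N.factorial := by
  calc ∑ p ∈ primesLE N, ((N / p : ℕ) : ℝ) * log p
      ≤ ∑ p ∈ primesLE N, (N.factorial.factorization p : ℝ) * log p := by
        gcongr with p hp
        obtain ⟨hpN, hp⟩ := mem_primesLE.mp hp
        exact div_le_factorization_factorial hp hpN
    _ ≤ ∑ p ∈ N.factorial.primeFactors, (N.factorial.factorization p : ℝ) * log p := by
        refine sum_le_sum_of_subset_of_nonneg (fun p hp ↦ ?_) (fun p _ _ ↦ by positivity)
        obtain ⟨hpN, hp⟩ := mem_primesLE.mp hp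
        exact Nat.mem_primeFactors.mpr ⟨hp, hp.dvd_factorial.mpr hpN, N.factorial_ne_zero⟩
    _ = log N.factorial := by
        rw [log_nat_eq_sum_factorization, Finsupp.sum, Nat.support_factorization]

theorem sum_primesLE_log_div_le (N : ℕ) :
    ∑ p ∈ primesLE N, log p / p ≤ log N + log 4 := by
  rcases N.eq_zero_or_pos with rfl | hN
  · simp [log_nonneg]
  have hN' : (0 : ℝ) < N := by exact_mod_cast hN
  -- `N / p ≤ ⌊N / p⌋ + 1`, so the sum is at most `(log N! + θ N) / N`
  have h : N * ∑ p ∈ primesLE N, log p / p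
      ≤ ∑ p ∈ primesLE N, ((N / p : ℕ) : ℝ) * log p + ∑ p ∈ primesLE N, log p := by
    rw [mul_sum, ← sum_add_distrib]
    gcongr with p hp
    have hp := (mem_primesLE.mp hp).2
    have hp' : (0 : ℝ) < p := by exact_mod_cast hp.pos
    have hfloor : (N : ℝ) / p ≤ ((N / p : ℕ) : ℝ) + 1 := by
      rw [div_le_iff₀ hp']
      have : N < (N / p + 1) * p := by rw [add_mul, one_mul]; exact Nat.lt_div_mul_add hp.pos
      exact_mod_cast this.le
    calc N * (log p / p) = (N : ℝ) / p * log p := by ring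
      _ ≤ (((N / p : ℕ) : ℝ) + 1) * log p := by gcongr
      _ = _ := by ring
  have hfact : log N.factorial ≤ N * log N := by
    rw [← log_pow]
    exact log_le_log (by positivity) (by exact_mod_cast N.factorial_le_pow)
  have htheta : ∑ p ∈ primesLE N, log p ≤ N * log 4 := by
    rw [← Chebyshev.theta_eq_sum_primesLE_log, mul_comm]
    exact Chebyshev.theta_le_log4_mul_x hN'.le
  refine le_of_mul_le_mul_left ?_ hN'
  linarith [sum_primesLE_div_mul_log_le_log_factorial N]

/-- A partial-summation potential: `∑_{p ≤ N} log p / p ≤ log N + log 4` makes it nonincreasing,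
which bounds `∑_{p ≤ N} 1 / (p - 1)` by `log log N + O(1)`. -/
noncomputable def mertensPotential (N : ℕ) : ℝ :=
  ∑ p ∈ primesLE N, 1 / ((p : ℝ) - 1) - (∑ p ∈ primesLE N, log p / p - log 4) / log N
    - log (log N) + 1 / N

theorem sum_primesLE_succ {M : Type*} [AddCommMonoid M] (f : ℕ → M) (N : ℕ) :
    ∑ p ∈ primesLE (N + 1), f p =
      ∑ p ∈ primesLE N, f p + if (N + 1).Prime then f (N + 1) else 0 := by
  rw [Nat.primesLE_succ]
  split_ifs
  · rw [sum_insert (Nat.notMem_primesLE N), add_comm]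
  · rw [add_zero]

theorem mertensPotential_succ_le {N : ℕ} (hN : 2 ≤ N) :
    mertensPotential (N + 1) ≤ mertensPotential N := by
  have hN' : (2 : ℝ) ≤ N := by exact_mod_cast hN
  have ha : 0 < log N := log_pos (by linarith)
  have hab : log N ≤ log (N + 1) := log_le_log (by linarith) (by linarith)
  have hb : 0 < log (N + 1) := ha.trans_le hab
  have hE : ∑ p ∈ primesLE N, log p / p - log 4 ≤ log N := by
    linarith [sum_primesLE_log_div_le N]
  unfold mertensPotential
  rw [sum_primesLE_succ, sum_primesLE_succ]
  push_cast
  simp only [add_sub_right_comm _ (ite _ _ _)]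
  generalize ∑ p ∈ primesLE N, log p / p - log 4 = E at hE
  generalize log N = a at ha hab hE
  generalize log (N + 1) = b at hb hab
  have hdecay : E / a - E / b ≤ log b - log a := by
    calc E / a - E / b = E * (1 / a - 1 / b) := by ring
      _ ≤ a * (1 / a - 1 / b) := by
          gcongr
          exact sub_nonneg.mpr (one_div_le_one_div_of_le ha hab)
      _ = 1 - (b / a)⁻¹ := by field_simp
      _ ≤ log (b / a) := one_sub_inv_le_log_of_pos (by positivity)
      _ = log b - log a := log_div hb.ne' ha.ne'
  split_ifs
  · have : (E + b / (N + 1)) / b = E / b + 1 / (N + 1) := by field_simp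
    rw [this, add_sub_cancel_right]
    linarith
  · have : 1 / ((N : ℝ) + 1) ≤ 1 / N := one_div_le_one_div_of_le (by linarith) (by linarith)
    rw [add_zero, add_zero]
    linarith

theorem primesLE_sixteen : primesLE 16 = {2, 3, 5, 7, 11, 13} := by decide

theorem log_four_le_sum_primesLE_sixteen :
    log 4 ≤ ∑ p ∈ primesLE 16, log p / p := by
  have h4 : log 4 = 2 * log 2 := by rw [← log_rpow two_pos]; norm_num
  have h8 : log 8 = 3 * log 2 := by rw [← log_rpow two_pos]; norm_num
  rw [primesLE_sixteen]
  norm_num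
  -- `log p ≥ ⌊log₂ p⌋ log 2`, and `1/2 + 1/3 + 2/5 + 2/7 + 3/11 + 3/13 > 2`
  linarith [log_le_log two_pos (by norm_num : (2 : ℝ) ≤ 3),
    log_le_log four_pos (by norm_num : (4 : ℝ) ≤ 5),
    log_le_log four_pos (by norm_num : (4 : ℝ) ≤ 7),
    log_le_log (by norm_num) (by norm_num : (8 : ℝ) ≤ 11),
    log_le_log (by norm_num) (by norm_num : (8 : ℝ) ≤ 13), log_pos one_lt_two]

theorem sum_primesLE_inv_sub_one_le {N : ℕ} (hN : 16 ≤ N) :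
    ∑ p ∈ primesLE N, 1 / ((p : ℝ) - 1) ≤ log (logb 16 N) + 253 / 80 := by
  have hanti : mertensPotential N ≤ mertensPotential 16 :=
    antitoneOn_nat_Ici_of_succ_le (fun n hn ↦ mertensPotential_succ_le hn)
      (show 2 ≤ 16 by norm_num) (le_trans (by norm_num) hN) hN
  have h16 : ∑ p ∈ primesLE 16, 1 / ((p : ℝ) - 1) = 21 / 10 := by
    rw [primesLE_sixteen]
    norm_num
  have hN' : (16 : ℝ) ≤ N := by exact_mod_cast hN
  have hlogN : 0 < log N := log_pos (by linarith)
  have hE : (∑ p ∈ primesLE N, log p / p - log 4) / log N ≤ 1 :=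
    div_le_one_of_le₀ (by linarith [sum_primesLE_log_div_le N]) hlogN.le
  have hloglog : log (logb 16 N) = log (log N) - log (log 16) :=
    log_div hlogN.ne' (log_pos (by norm_num)).ne'
  have h16' : (0 : ℝ) ≤ (∑ p ∈ primesLE 16, log p / p - log 4) / log 16 :=
    div_nonneg (by linarith [log_four_le_sum_primesLE_sixteen]) (log_nonneg (by norm_num))
  unfold mertensPotential at hanti
  rw [h16] at hanti
  push_cast at hanti
  have : (0 : ℝ) ≤ 1 / N := by positivity
  -- `253 / 80 = 1 + 21 / 10 + 1 / 16`
  linarith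

theorem card_filter_primeFactors_lt_le {n T k : ℕ} (hn : n < (T + 1) ^ (k + 1)) :
    #{p ∈ n.primeFactors | T < p} ≤ k := by
  rcases eq_or_ne n 0 with rfl | hn0
  · simp
  have : (T + 1) ^ #{p ∈ n.primeFactors | T < p} < (T + 1) ^ (k + 1) :=
    calc (T + 1) ^ #{p ∈ n.primeFactors | T < p}
        ≤ ∏ p ∈ n.primeFactors with T < p, p :=
          pow_card_le_prod _ _ _ fun p hp ↦ (mem_filter.mp hp).2
      _ ≤ ∏ p ∈ n.primeFactors, p := prod_le_prod_of_subset_of_one_le' (filter_subset _ _)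
          fun p hp _ ↦ (Nat.prime_of_mem_primeFactors hp).one_le
      _ ≤ n := Nat.le_of_dvd (Nat.pos_of_ne_zero hn0) (Nat.prod_primeFactors_dvd n)
      _ < (T + 1) ^ (k + 1) := hn
  have hT : T ≠ 0 := by rintro rfl; simp_all
  have := (Nat.pow_lt_pow_iff_right (by omega)).mp this
  omega

theorem sum_primeFactors_inv_sub_one_le {n T k : ℕ} (hT : 0 < T) (hn : n < (T + 1) ^ (k + 1)) :
    ∑ p ∈ n.primeFactors, 1 / ((p : ℝ) - 1) ≤ ∑ p ∈ primesLE T, 1 / ((p : ℝ) - 1) + k / T := by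
  have hinv_nonneg {p : ℕ} (hp : p.Prime) : 0 ≤ 1 / ((p : ℝ) - 1) := by
    have : (2 : ℝ) ≤ p := by exact_mod_cast hp.two_le
    exact one_div_nonneg.mpr (by linarith)
  rw [← sum_filter_not_add_sum_filter n.primeFactors (T < ·)]
  gcongr ?_ + ?_
  · refine sum_le_sum_of_subset_of_nonneg (fun p hp ↦ ?_)
      fun p hp _ ↦ hinv_nonneg (mem_primesLE.mp hp).2
    obtain ⟨hp, hpT⟩ := mem_filter.mp hp
    exact mem_primesLE.mpr ⟨not_lt.mp hpT, Nat.prime_of_mem_primeFactors hp⟩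
  · have hT' : (0 : ℝ) < T := by exact_mod_cast hT
    calc ∑ p ∈ n.primeFactors with T < p, 1 / ((p : ℝ) - 1)
        ≤ ∑ p ∈ n.primeFactors with T < p, 1 / (T : ℝ) := by
          gcongr with p hp
          have : (T : ℝ) + 1 ≤ p := by exact_mod_cast (mem_filter.mp hp).2
          linarith
      _ ≤ k / T := by
          rw [sum_const, nsmul_eq_mul, mul_one_div]
          gcongr
          exact_mod_cast card_filter_primeFactors_lt_le hn

theorem exp_neg_one_div_sub_one_le_one_sub_inv {x : ℝ} (hx : 1 < x) :
    exp (-(1 / (x - 1))) ≤ 1 - x⁻¹ := by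
  have hpos : 0 < 1 - x⁻¹ := sub_pos.mpr (inv_lt_one_of_one_lt₀ hx)
  rw [← le_log_iff_exp_le hpos]
  convert one_sub_inv_le_log_of_pos hpos using 1
  have : x - 1 ≠ 0 := by linarith
  field_simp
  ring

theorem mul_exp_neg_le_totient (n : ℕ) :
    n * exp (-∑ p ∈ n.primeFactors, 1 / ((p : ℝ) - 1)) ≤ n.totient := by
  have h : (n.totient : ℝ) = n * ∏ p ∈ n.primeFactors, (1 - (p : ℝ)⁻¹) := by
    simpa using congrArg (Rat.cast : ℚ → ℝ) (Nat.totient_eq_mul_prod_factors n)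
  rw [h, ← sum_neg_distrib, exp_sum]
  gcongr with p hp
  exact exp_neg_one_div_sub_one_le_one_sub_inv
    (by exact_mod_cast (Nat.prime_of_mem_primeFactors hp).one_lt)

theorem le_logb_of_pow_le {b x : ℝ} {k : ℕ} (hb : 1 < b) (h : b ^ k ≤ x) :
    (k : ℝ) ≤ logb b x := by
  rw [le_logb_iff_rpow_le hb ((pow_pos (zero_lt_one.trans hb) k).trans_le h), rpow_natCast]
  exact h

theorem sum_primeFactors_inv_sub_one_le_of_lt_eleven_pow {n k : ℕ} (hn : n < 11 ^ (k + 1)) :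
    ∑ p ∈ n.primeFactors, 1 / ((p : ℝ) - 1) ≤ 23 / 12 + k / 10 := by
  have h10 : ∑ p ∈ primesLE 10, 1 / ((p : ℝ) - 1) = 23 / 12 := by
    rw [show primesLE 10 = {2, 3, 5, 7} by decide]
    norm_num
  have := sum_primeFactors_inv_sub_one_le (T := 10) (by norm_num) hn
  rw [h10] at this
  exact_mod_cast this

theorem sum_primeFactors_inv_sub_one_le_of_lt_two_pow {n N : ℕ} (hN : 16 ≤ N)
    (hn : n < 2 ^ (N + 1)) :
    ∑ p ∈ n.primeFactors, 1 / ((p : ℝ) - 1) ≤ log (logb 16 N) + 273 / 80 := by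
  -- at most `N / 4` primes above `N` divide `n`
  have hn' : n < (N + 1) ^ (N / 4 + 1) := by
    refine hn.trans_le ?_
    calc 2 ^ (N + 1) ≤ 2 ^ (4 * (N / 4 + 1)) := Nat.pow_le_pow_right two_pos (by omega)
      _ = 16 ^ (N / 4 + 1) := by rw [pow_mul]; norm_num
      _ ≤ (N + 1) ^ (N / 4 + 1) := Nat.pow_le_pow_left (by omega) _
  have hk : ((N / 4 : ℕ) : ℝ) / N ≤ 1 / 4 := by
    rw [div_le_div_iff₀ (by positivity) four_pos]
    exact_mod_cast (by omega : N / 4 * 4 ≤ 1 * N)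
  linarith [sum_primeFactors_inv_sub_one_le (by omega) hn', sum_primesLE_inv_sub_one_le hN]

theorem sum_primeFactors_inv_sub_one_le_log {n N : ℕ} (hN : 2 ≤ N) (hn : n < 2 ^ (N + 1)) :
    ∑ p ∈ n.primeFactors, 1 / ((p : ℝ) - 1) ≤ log (8 * logb 2 N) := by
  have hlog2 := log_two_gt_d9
  have hlog_two_pow (k : ℕ) : log (2 ^ k) = k * log 2 := log_pow 2 k
  have hlogb (k : ℕ) (hk : 0 < k) (h : 2 ^ k ≤ N) : log (8 * k) ≤ log (8 * logb 2 N) := by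
    have := le_logb_of_pow_le (x := N) one_lt_two (by exact_mod_cast h)
    exact log_le_log (by positivity) (by linarith)
  rcases lt_or_ge N 4 with hN4 | hN4
  · have hS := sum_primeFactors_inv_sub_one_le_of_lt_eleven_pow (k := 1)
      (hn.trans_le ((Nat.pow_le_pow_right two_pos (by omega : N + 1 ≤ 4)).trans (by norm_num)))
    calc ∑ p ∈ n.primeFactors, 1 / ((p : ℝ) - 1) ≤ log (2 ^ 3) := by
          rw [hlog_two_pow]; push_cast at hS ⊢; linarith
      _ = log (8 * (1 : ℕ)) := by norm_num
      _ ≤ log (8 * logb 2 N) := hlogb 1 one_pos (by omega)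
  rcases lt_or_ge N 16 with hN16 | hN16
  · have hS := sum_primeFactors_inv_sub_one_le_of_lt_eleven_pow (k := 4)
      (hn.trans_le ((Nat.pow_le_pow_right two_pos (by omega : N + 1 ≤ 16)).trans (by norm_num)))
    calc ∑ p ∈ n.primeFactors, 1 / ((p : ℝ) - 1) ≤ log (2 ^ 4) := by
          rw [hlog_two_pow]; push_cast at hS ⊢; linarith
      _ = log (8 * (2 : ℕ)) := by norm_num
      _ ≤ log (8 * logb 2 N) := hlogb 2 two_pos (by omega)
  have h32 : log (8 * logb 2 N) = log (2 ^ 5) + log (logb 16 N) := by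
    have hpos : 0 < logb 16 N := logb_pos (by norm_num) (by exact_mod_cast (by omega : 1 < N))
    have h16 : logb 16 N = logb 2 N / 4 := by
      rw [show (16 : ℝ) = 2 ^ 4 by norm_num, logb, logb, log_pow]; push_cast; ring
    rw [← log_mul (by norm_num) hpos.ne', h16]
    ring_nf
  rw [h32, hlog_two_pow]
  push_cast
  linarith [sum_primeFactors_inv_sub_one_le_of_lt_two_pow hN16 hn]

theorem stmt12 (n : ℕ) (hn : 3 < n) :
    (n : ℝ) / (8 * Real.logb 2 (Real.logb 2 n)) ≤ (Nat.totient n : ℝ) := by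
  set N := Nat.log 2 n
  have hN : 2 ≤ N := Nat.le_log_of_pow_le one_lt_two (by omega)
  have hL : 1 ≤ logb 2 N := by
    exact_mod_cast le_logb_of_pow_le (k := 1) one_lt_two (by exact_mod_cast hN)
  have hLL : logb 2 N ≤ logb 2 (logb 2 n) :=
    logb_le_logb_of_le one_lt_two (by positivity) (by exact_mod_cast natLog_le_logb n 2)
  have hS : ∑ p ∈ n.primeFactors, 1 / ((p : ℝ) - 1) ≤ log (8 * logb 2 (logb 2 n)) :=
    (sum_primeFactors_inv_sub_one_le_log hN
      (Nat.lt_pow_succ_log_self one_lt_two n)).trans (log_le_log (by positivity) (by linarith))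
  calc (n : ℝ) / (8 * logb 2 (logb 2 n)) = n * exp (-log (8 * logb 2 (logb 2 n))) := by
        rw [exp_neg, exp_log (by linarith), div_eq_mul_inv]
    _ ≤ n * exp (-∑ p ∈ n.primeFactors, 1 / ((p : ℝ) - 1)) := by gcongr
    _ ≤ n.totient := mul_exp_neg_le_totient n
end
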